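/- arXiv:2001.03971 — 2 statements merged into one kernel-verified Lean document; each statement's English description precedes it below -/
import Mathlib

section
/- If (W, *, ¬, 1) is a Wajsberg algebra, then defining x ⊕ y = ¬x * y and 0 = ¬1 yields an MV-algebra (W, ⊕, ¬, 0). -/
/-- An MV-algebra: an abelian monoid `(X, add, zero)` with a unary `neg` satisfying
`x ⊕ ¬0 = ¬0`, `¬¬x = x`, and `¬(¬x ⊕ y) ⊕ y = ¬(¬y ⊕ x) ⊕ x`. -/
structure MVAlg (X : Type) where
  add : X → X → X
  zero : X
  neg : X → X
  add_assoc : ∀ a b c : X, add (add a b) c = add a (add b c)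
  add_comm : ∀ a b : X, add a b = add b a
  zero_add : ∀ a : X, add zero a = a
  add_neg_zero : ∀ a : X, add a (neg zero) = neg zero
  neg_neg : ∀ a : X, neg (neg a) = a
  lukasiewicz : ∀ a b : X, add (neg (add (neg a) b)) b = add (neg (add (neg b) a)) a

namespace MVAlg

variable {X : Type}

/-- `1 = ¬0`. -/
def one (M : MVAlg X) : X := M.neg M.zero

/-- `x ⊙ y = ¬(¬x ⊕ ¬y)`. -/
def mul (M : MVAlg X) (x y : X) : X := M.neg (M.add (M.neg x) (M.neg y))

/-- `x ∨ y = ¬(¬x ⊕ y) ⊕ y`. -/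
def sup (M : MVAlg X) (x y : X) : X := M.add (M.neg (M.add (M.neg x) y)) y

/-- `x ∧ y = x ⊙ (¬x ⊕ y)`. -/
def inf (M : MVAlg X) (x y : X) : X := M.mul x (M.add (M.neg x) y)

/-- `x ≤ y` iff `¬x ⊕ y = 1`. -/
def le (M : MVAlg X) (x y : X) : Prop := M.add (M.neg x) y = M.one

/-- The Fibonacci sequence attached to `x, y`: `u₀ = x`, `u₁ = y`, `u_{n+2} = u_n ⊕ u_{n+1}`. -/
def fibSeq (M : MVAlg X) (x y : X) : ℕ → X
  | 0 => x
  | 1 => y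
  | (n+2) => M.add (MVAlg.fibSeq M x y n) (MVAlg.fibSeq M x y (n+1))

/-- Scalar multiple: `0·z = 0`, `(k+1)·z = k·z ⊕ z`. -/
def smul (M : MVAlg X) : ℕ → X → X
  | 0, _ => M.zero
  | (k+1), z => M.add (MVAlg.smul M k z) z

end MVAlg

/-- A Wajsberg algebra `(W, *, ¬, 1)`. -/
structure WajAlg (W : Type) where
  star : W → W → W
  neg : W → W
  one : W
  ax1 : ∀ x y z : W, star (star x y) (star (star y z) (star x z)) = one
  ax2 : ∀ x y : W, star (star x y) y = star (star y x) x
  ax3 : ∀ x y : W, star (star (neg x) (neg y)) (star y x) = one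
  ax4 : ∀ x : W, star one x = x


namespace WajAlg

variable {W : Type} (A : WajAlg W)

lemma p1 (x y : W) : A.star x (A.star (A.star x y) y) = A.one := by
  have h := A.ax1 A.one x y
  rwa [A.ax4, A.ax4] at h

lemma refl (x : W) : A.star x x = A.one := by
  have h := A.p1 A.one x
  rwa [A.ax4, A.ax4] at h

lemma star_one (x : W) : A.star x A.one = A.one := by
  have h := A.p1 x A.one
  rwa [A.ax2, A.ax4, A.refl] at h

lemma antisym {x y : W} (h1 : A.star x y = A.one) (h2 : A.star y x = A.one) : x = y := by
  have h := A.ax2 x y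
  rw [h1, h2, A.ax4, A.ax4] at h
  exact h.symm

lemma trans {x y z : W} (h1 : A.star x y = A.one) (h2 : A.star y z = A.one) :
    A.star x z = A.one := by
  have h := A.ax1 x y z
  rwa [h1, h2, A.ax4, A.ax4] at h

lemma mono1 {x y : W} (h : A.star x y = A.one) (z : W) :
    A.star (A.star y z) (A.star x z) = A.one := by
  have h1 := A.ax1 x y z
  rwa [h, A.ax4] at h1

lemma exch_le (x y z : W) :
    A.star (A.star x (A.star y z)) (A.star y (A.star x z)) = A.one := by
  exact A.trans (A.ax1 x (A.star y z) z) (A.mono1 (A.p1 y z) (A.star x z))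

lemma exch (x y z : W) : A.star x (A.star y z) = A.star y (A.star x z) :=
  A.antisym (A.exch_le x y z) (A.exch_le y x z)

lemma le_star (x y : W) : A.star x (A.star y x) = A.one := by
  rw [A.exch, A.refl, A.star_one]

lemma bot (x : W) : A.star (A.neg A.one) x = A.one := by
  have h1 := A.le_star (A.neg A.one) (A.neg x)
  have h2 := A.ax3 x A.one
  rw [A.ax4] at h2
  exact A.trans h1 h2

lemma negneg_one : A.neg (A.neg A.one) = A.one := by
  have h1 := A.ax3 (A.neg A.one) A.one
  rw [A.ax4] at h1
  have h2 := A.ax2 (A.neg (A.neg A.one)) (A.neg A.one)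
  rw [h1, A.bot, A.ax4] at h2
  exact h2.symm

lemma negneg_le (x : W) : A.star (A.neg (A.neg x)) x = A.one := by
  have h1 := A.ax3 (A.neg A.one) (A.neg x)
  have h2 := A.trans h1 (A.ax3 x A.one)
  rwa [A.negneg_one, A.ax4, A.ax4] at h2

lemma le_negneg (x : W) : A.star x (A.neg (A.neg x)) = A.one := by
  have h := A.ax3 (A.neg (A.neg x)) x
  rwa [A.negneg_le, A.ax4] at h

lemma negneg (x : W) : A.neg (A.neg x) = x :=
  A.antisym (A.negneg_le x) (A.le_negneg x)

lemma contrap (x y : W) : A.star x y = A.star (A.neg y) (A.neg x) := by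
  have h1 := A.ax3 (A.neg x) (A.neg y)
  rw [A.negneg, A.negneg] at h1
  exact A.antisym h1 (A.ax3 y x)

lemma addcomm (x y : W) : A.star (A.neg x) y = A.star (A.neg y) x := by
  rw [A.contrap (A.neg x) y, A.negneg]

end WajAlg

theorem stmt_3 {W : Type} (A : WajAlg W) :
    ∃ M : MVAlg W,
      (∀ x y : W, M.add x y = A.star (A.neg x) y) ∧
      M.neg = A.neg ∧
      M.zero = A.neg A.one := by
  refine ⟨⟨fun x y => A.star (A.neg x) y, A.neg A.one, A.neg, ?_, ?_, ?_, ?_, ?_, ?_⟩,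
    fun x y => rfl, rfl, rfl⟩
  · intro a b c
    show A.star (A.neg (A.star (A.neg a) b)) c = A.star (A.neg a) (A.star (A.neg b) c)
    rw [A.contrap (A.neg (A.star (A.neg a) b)) c, A.negneg,
      A.exch (A.neg c) (A.neg a) b, A.addcomm c b]
  · intro a b
    exact A.addcomm a b
  · intro a
    show A.star (A.neg (A.neg A.one)) a = a
    rw [A.negneg_one, A.ax4]
  · intro a
    show A.star (A.neg a) (A.neg (A.neg A.one)) = A.neg (A.neg A.one)
    rw [A.negneg_one, A.star_one]
  · intro a
    exact A.negneg a
  · intro a b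
    show A.star (A.neg (A.neg (A.star (A.neg (A.neg a)) b))) b
        = A.star (A.neg (A.neg (A.star (A.neg (A.neg b)) a))) a
    simp only [A.negneg]
    exact A.ax2 a b
end

section
/- In a finite MV-algebra X, for all x, y ∈ X the Fibonacci sequence u₀ = x, u₁ = y, u_{n+2} = u_n ⊕ u_{n+1} is eventually stationary: there exists k such that u_n = u_k for all n ≥ k. -/
namespace MVAlg

variable {X : Type} (M : MVAlg X)

lemma add_zero (a : X) : M.add a M.zero = a := by
  rw [M.add_comm]
  exact M.zero_add a

lemma add_one (a : X) : M.add a M.one = M.one := M.add_neg_zero a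

lemma one_add (a : X) : M.add M.one a = M.one := by
  rw [M.add_comm]
  exact M.add_one a

lemma neg_one : M.neg M.one = M.zero := M.neg_neg M.zero

lemma neg_add_self (a : X) : M.add (M.neg a) a = M.one := by
  simpa only [neg_one, zero_add, add_one] using M.lukasiewicz M.one a

lemma le_antisymm {a b : X} (hab : M.le a b) (hba : M.le b a) : a = b := by
  have h := M.lukasiewicz a b
  unfold le at hab hba
  rwa [hab, hba, neg_one, zero_add, zero_add, eq_comm] at h

def AddLE (a b : X) : Prop := ∃ d, M.add a d = b

lemma le_of_addLE {a b : X} (h : M.AddLE a b) : M.le a b := by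
  obtain ⟨d, rfl⟩ := h
  rw [le, ← M.add_assoc, M.neg_add_self, M.one_add]

abbrev toPartialOrder : PartialOrder X where
  le := M.AddLE
  le_refl a := ⟨M.zero, M.add_zero a⟩
  le_trans _ _ _ := fun ⟨d, hd⟩ ⟨e, he⟩ => ⟨M.add d e, by rw [← M.add_assoc, hd, he]⟩
  le_antisymm _ _ hab hba := M.le_antisymm (M.le_of_addLE hab) (M.le_of_addLE hba)

lemma exists_forall_ge_eq_of_addLE_succ [Finite X] (f : ℕ → X)
    (hf : ∀ n, M.AddLE (f n) (f (n + 1))) : ∃ k, ∀ n ≥ k, f n = f k := by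
  let := M.toPartialOrder
  have : WellFoundedGT X := Finite.to_wellFoundedGT
  obtain ⟨k, hk⟩ := WellFoundedGT.monotone_chain_condition ⟨f, monotone_nat_of_le_succ hf⟩
  exact ⟨k, fun n hn => (hk n hn).symm⟩

lemma fibSeq_addLE_succ (x y : X) (n : ℕ) :
    M.AddLE (M.fibSeq x y (n + 1)) (M.fibSeq x y (n + 2)) :=
  ⟨M.fibSeq x y n, by rw [M.add_comm]; rfl⟩

end MVAlg

theorem stmt_11 {X : Type} [Finite X] (M : MVAlg X) (x y : X) :
    ∃ k : ℕ, ∀ n ≥ k, M.fibSeq x y n = M.fibSeq x y k := by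
  obtain ⟨k, hk⟩ := M.exists_forall_ge_eq_of_addLE_succ (fun n => M.fibSeq x y (n + 1))
    (M.fibSeq_addLE_succ x y)
  refine ⟨k + 1, fun n hn => ?_⟩
  obtain ⟨m, rfl⟩ := Nat.exists_eq_add_of_le' (Nat.one_le_of_lt hn)
  exact hk m (by omega)
end
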